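/- arXiv:math/0606322 — 2 statements merged into one kernel-verified Lean document; each statement's English description precedes it below -/
import Mathlib

section
/- Let b₁, …, b_m ∈ ℤ^d and let F ⊆ {1,…,m} be such that (b_i)_{i∈F} is ℚ-linearly independent. Let Box = {v ∈ ℤ^d : v = Σ_{i∈F} α_i b_i for some rationals 0 < α_i < 1}, and with b_{L,i} = (b_i, e_i), b′_{L,i} = (0, e_i) ∈ ℤ^d × ℤ^m (e_i the i-th standard basis vector of ℤ^m), let LBox = {w ∈ ℤ^d × ℤ^m : w = Σ_{i∈F} β_i b_{L,i} + Σ_{i∈F} γ_i b′_{L,i} for some rationals 0 < β_i, γ_i < 1}. Then the map v ↦ (v, Σ_{i∈F} e_i) is a bijection from Box onto LBox; moreover if v = Σ_{i∈F} α_i b_i with 0 < α_i < 1, then its image equals Σ_{i∈F} α_i b_{L,i} + Σ_{i∈F} (1−α_i) b′_{L,i}, so the sum of the 2|F| fractional coefficients of the image is |F|. -/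
open scoped BigOperators

/-- The rational vector in ℚ^d associated to a lattice point of ℤ^d. -/
def castQ {d : ℕ} (v : Fin d → ℤ) : Fin d → ℚ := fun j => (v j : ℚ)

/-- Lemma 3.5 (torsion-free content): box elements of the cone spanned by a
ℚ-linearly independent family (b_i)_{i∈F} correspond bijectively, via
v ↦ (v, Σ_{i∈F} e_i), to box elements of the Lawrence lifting
{b_{L,i} = (b_i,e_i), b′_{L,i} = (0,e_i) : i ∈ F}; moreover if
v = Σ α_i b_i with 0 < α_i < 1 then its image is
Σ α_i b_{L,i} + Σ (1−α_i) b′_{L,i}, so the fractional coefficients of the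
image sum to |F|. -/
theorem box_lawrence_bijection {d m : ℕ} (b : Fin m → Fin d → ℤ)
    (F : Finset (Fin m))
    (hb : LinearIndependent ℚ (fun i : F => castQ (b i.1))) :
    let bL : Fin m → (Fin d → ℚ) × (Fin m → ℚ) :=
      fun i => (castQ (b i), Pi.single i 1)
    let bL' : Fin m → (Fin d → ℚ) × (Fin m → ℚ) :=
      fun i => (0, Pi.single i 1)
    let Box : Set (Fin d → ℤ) := {v | ∃ α : Fin m → ℚ,
      (∀ i ∈ F, 0 < α i ∧ α i < 1) ∧ castQ v = ∑ i ∈ F, α i • castQ (b i)}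
    let LBox : Set ((Fin d → ℤ) × (Fin m → ℤ)) := {w | ∃ β γ : Fin m → ℚ,
      (∀ i ∈ F, 0 < β i ∧ β i < 1) ∧ (∀ i ∈ F, 0 < γ i ∧ γ i < 1) ∧
      (castQ w.1, fun j => ((w.2 j : ℚ))) =
        ∑ i ∈ F, β i • bL i + ∑ i ∈ F, γ i • bL' i}
    Set.BijOn (fun v => (v, ∑ i ∈ F, Pi.single i (1 : ℤ))) Box LBox ∧
    (∀ v ∈ Box, ∀ α : Fin m → ℚ, (∀ i ∈ F, 0 < α i ∧ α i < 1) →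
      castQ v = ∑ i ∈ F, α i • castQ (b i) →
      ((castQ v, fun j => (((∑ i ∈ F, Pi.single i (1 : ℤ)) j : ℚ))) =
          ∑ i ∈ F, α i • bL i + ∑ i ∈ F, (1 - α i) • bL' i) ∧
      (∑ i ∈ F, α i) + (∑ i ∈ F, (1 - α i)) = (F.card : ℚ)) := by
  intro bL bL' Box LBox
  have hsum : ∀ β γ : Fin m → ℚ,
      (∑ i ∈ F, β i • bL i + ∑ i ∈ F, γ i • bL' i) =
        (∑ i ∈ F, β i • castQ (b i),
          ∑ i ∈ F, (β i + γ i) • (Pi.single i 1 : Fin m → ℚ)) := by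
    intro β γ
    refine Prod.ext ?_ ?_
    · simp [bL, bL', Prod.fst_sum]
    · simp [bL, bL', Prod.snd_sum, add_smul, Finset.sum_add_distrib]
  have hone : ∀ j : Fin m,
      ((∑ i ∈ F, Pi.single i (1 : ℤ)) j : ℚ) = if j ∈ F then 1 else 0 := by
    intro j
    rw [Finset.sum_apply]
    simp [Finset.sum_pi_single]
  refine ⟨⟨?_, ?_, ?_⟩, ?_⟩
  · -- MapsTo
    rintro v ⟨α, hα, hv⟩
    refine ⟨α, fun i => 1 - α i, hα, fun i hi =>
      ⟨show (0:ℚ) < 1 - α i by linarith [(hα i hi).2],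
       show (1:ℚ) - α i < 1 by linarith [(hα i hi).1]⟩, ?_⟩
    rw [hsum]
    refine Prod.ext hv ?_
    funext j
    dsimp only
    rw [hone, Finset.sum_apply]
    simp [Finset.sum_pi_single]
  · -- InjOn
    intro v _ w _ h
    exact congrArg Prod.fst h
  · -- SurjOn
    rintro ⟨w1, w2⟩ ⟨β, γ, hβ, hγ, heq⟩
    rw [hsum] at heq
    have h1 : castQ w1 = ∑ i ∈ F, β i • castQ (b i) := congrArg Prod.fst heq
    have h2 : ∀ j, (w2 j : ℚ) = if j ∈ F then β j + γ j else 0 := by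
      intro j
      have := congrFun (congrArg Prod.snd heq) j
      dsimp only at this
      rw [Finset.sum_apply] at this
      simpa [Pi.single_apply, mul_ite, Finset.sum_ite_eq, Finset.sum_ite_eq'] using this
    have hw2 : w2 = ∑ i ∈ F, Pi.single i (1 : ℤ) := by
      funext j
      have hj := h2 j
      by_cases hjF : j ∈ F
      · rw [if_pos hjF] at hj
        have h0 : (0 : ℚ) < (w2 j : ℚ) := by
          rw [hj]; linarith [(hβ j hjF).1, (hγ j hjF).1]
        have h2' : (w2 j : ℚ) < 2 := by
          rw [hj]; linarith [(hβ j hjF).2, (hγ j hjF).2]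
        have hl : (0 : ℤ) < w2 j := by exact_mod_cast h0
        have hr : w2 j < 2 := by exact_mod_cast h2'
        have : w2 j = 1 := by omega
        rw [this]
        have : ((∑ i ∈ F, Pi.single i (1 : ℤ)) j : ℚ) = 1 := by
          rw [hone]; simp [hjF]
        exact_mod_cast this.symm
      · rw [if_neg hjF] at hj
        have : w2 j = 0 := by exact_mod_cast hj
        rw [this]
        have : ((∑ i ∈ F, Pi.single i (1 : ℤ)) j : ℚ) = 0 := by
          rw [hone]; simp [hjF]
        exact_mod_cast this.symm
    refine ⟨w1, ⟨β, hβ, h1⟩, ?_⟩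
    simp [hw2]
  · -- extra part
    rintro v ⟨α', hα', hv'⟩ α hα hv
    constructor
    · rw [hsum]
      refine Prod.ext hv ?_
      funext j
      dsimp only
      rw [hone, Finset.sum_apply]
      simp [Finset.sum_pi_single]
    · rw [← Finset.sum_add_distrib]
      simp
end

section
/- Let b₁, …, b_m ∈ ℤ^d. Let P be the set of pairs (c, F) where F ⊆ {1,…,m} is such that (b_i)_{i∈F} is ℚ-linearly independent and c ∈ ℤ^d satisfies c = Σ_{i∈F} c_i b_i for some rational numbers c_i > 0 (i ∈ F); in particular (0, ∅) ∈ P. On the ℚ-vector space ℚ[Δ_β] := ⊕_{(c,F)∈P} ℚ·y^{(c,F)} define a bilinear product: if (b_i)_{i∈F₁∪F₂} is ℚ-linearly independent, set y^{(c₁,F₁)} · y^{(c₂,F₂)} := (−1)^{|σ_ε|} y^{(c₁+c₂+ε, F₁∪F₂)}, where for a nonnegative rational combination c = Σ_{i∈F₁∪F₂} c_i b_i one defines ⌈c⌉ := Σ_i ⌈c_i⌉ b_i, ε := ⌈c₁⌉ + ⌈c₂⌉ − ⌈c₁+c₂⌉, and σ_ε := {i ∈ F₁∪F₂ : the coefficient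 of ε at b_i is nonzero}; if (b_i)_{i∈F₁∪F₂} is ℚ-linearly dependent, set the product to 0. Then this product is well defined (the resulting pair lies in P), commutative, and associative, and y^{(0,∅)} is a multiplicative unit, so ℚ[Δ_β] is a commutative associative unital ℚ-algebra. -/
/-! Inside a cone a lattice point is the same as its coefficient vector `X ∈ ℚ≥0^m`, unique by
linear independence. Coordinatewise, with `δ(x, y) = ⌈x⌉ + ⌈y⌉ - ⌈x + y⌉ ∈ {0, 1}` and
`x ⊕ y = x + y + δ(x, y)`, the product is `y^X · y^Y = (-1)^{Σ δ(Xᵢ, Yᵢ)} y^{X ⊕ Y}`.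
Since `⌈x ⊕ y⌉ = ⌈x⌉ + ⌈y⌉`, both `(x ⊕ y) ⊕ z` and `x ⊕ (y ⊕ z)` equal
`x + y + z + ⌈x⌉ + ⌈y⌉ + ⌈z⌉ - ⌈x + y + z⌉`, and `δ` satisfies the matching cocycle identity,
so the product of three basis elements is associative when the union of their cones is linearly
independent; otherwise both sides vanish. Commutativity and the unit are immediate, and
bilinearity extends everything to `ℚ[Δ_β]`. -/

open scoped BigOperators Classical

/-- N^{Δ_β}: the set of pairs (c, F) where (b_i)_{i∈F} is ℚ-linearly
independent and c ∈ ℤ^d is a strictly positive rational combination of the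
b_i, i ∈ F.  (In particular (0, ∅) ∈ P.) -/
def multiFanPairs {d m : ℕ} (b : Fin m → Fin d → ℤ) :
    Set ((Fin d → ℤ) × Finset (Fin m)) :=
  {p | LinearIndependent ℚ (fun i : p.2 => castQ (b i.1)) ∧
    ∃ γ : Fin m → ℚ, (∀ i ∈ p.2, 0 < γ i) ∧
      castQ p.1 = ∑ i ∈ p.2, γ i • castQ (b i)}

/-- The coefficients of a lattice point c as a rational combination of the
b_i, i ∈ F (zero outside F); well defined when (b_i)_{i∈F} is ℚ-linearly
independent and c lies in their span. -/
noncomputable def coeffOf {d m : ℕ} (b : Fin m → Fin d → ℤ)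
    (F : Finset (Fin m)) (c : Fin d → ℤ) : Fin m → ℚ :=
  if h : ∃ γ : Fin m → ℚ, (∀ i ∉ F, γ i = 0) ∧
      castQ c = ∑ i ∈ F, γ i • castQ (b i)
  then h.choose else 0

/-- The coefficients of ε = ⌈c₁⌉ + ⌈c₂⌉ − ⌈c₁+c₂⌉ in the generators
(b_i)_{i∈F₁∪F₂}, where ⌈·⌉ is the coefficientwise ceiling with respect to
F₁ ∪ F₂. -/
noncomputable def epsCoeff {d m : ℕ} (b : Fin m → Fin d → ℤ)
    (F₁ F₂ : Finset (Fin m)) (c₁ c₂ : Fin d → ℤ) : Fin m → ℤ :=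
  fun i => ⌈coeffOf b (F₁ ∪ F₂) c₁ i⌉ + ⌈coeffOf b (F₁ ∪ F₂) c₂ i⌉
    - ⌈coeffOf b (F₁ ∪ F₂) (c₁ + c₂) i⌉

/-- The product of two basis elements y^{(c₁,F₁)}, y^{(c₂,F₂)} of ℚ[Δ_β]:
(−1)^{|σ_ε|} y^{(c₁+c₂+ε, F₁∪F₂)} if (b_i)_{i∈F₁∪F₂} is ℚ-linearly
independent, and 0 otherwise; here ε = ⌈c₁⌉ + ⌈c₂⌉ − ⌈c₁+c₂⌉ and σ_ε is the
set of indices of F₁∪F₂ at which the coefficient of ε is nonzero. -/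
noncomputable def multiFanMulB {d m : ℕ} (b : Fin m → Fin d → ℤ)
    (p q : (Fin d → ℤ) × Finset (Fin m)) :
    ((Fin d → ℤ) × Finset (Fin m)) →₀ ℚ :=
  if LinearIndependent ℚ (fun i : (p.2 ∪ q.2 : Finset (Fin m)) => castQ (b i.1))
  then
    ((-1 : ℚ) ^
        ((p.2 ∪ q.2).filter (fun i => epsCoeff b p.2 q.2 p.1 q.1 i ≠ 0)).card) •
      Finsupp.single
        (p.1 + q.1 + ∑ i ∈ p.2 ∪ q.2, epsCoeff b p.2 q.2 p.1 q.1 i • b i,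
          p.2 ∪ q.2) 1
  else 0

/-- The bilinear extension of `multiFanMulB` to ℚ[Δ_β] = ⊕_{(c,F)} ℚ·y^{(c,F)}. -/
noncomputable def multiFanMul {d m : ℕ} (b : Fin m → Fin d → ℤ)
    (f g : ((Fin d → ℤ) × Finset (Fin m)) →₀ ℚ) :
    ((Fin d → ℤ) × Finset (Fin m)) →₀ ℚ :=
  f.sum fun p a => g.sum fun q c => (a * c) • multiFanMulB b p q

lemma card_filter_ne_zero_eq_sum {ι : Type*} {s : Finset ι} {ε : ι → ℤ}
    [DecidablePred fun i => ε i ≠ 0] (h0 : ∀ i, 0 ≤ ε i) (h1 : ∀ i, ε i ≤ 1) :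
    ((s.filter fun i => ε i ≠ 0).card : ℤ) = ∑ i ∈ s, ε i := by
  rw [Finset.natCast_card_filter]
  refine Finset.sum_congr rfl fun i _ => ?_
  have := h0 i; have := h1 i
  split_ifs <;> omega

lemma LinearMap.eqOn_supported {α R M : Type*} [Semiring R] [AddCommMonoid M] [Module R M]
    {s : Set α} {φ ψ : (α →₀ R) →ₗ[R] M}
    (h : ∀ a ∈ s, φ (Finsupp.single a 1) = ψ (Finsupp.single a 1)) :
    Set.EqOn φ ψ (Finsupp.supported R R s) := by
  rw [Finsupp.supported_eq_span_single]
  exact LinearMap.eqOn_span' fun _ ⟨a, ha, hx⟩ => hx ▸ h a ha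

section CeilDefect

variable {α : Type*} [CommRing α] [LinearOrder α] [FloorRing α]

def ceilDefect (x y : α) : ℤ := ⌈x⌉ + ⌈y⌉ - ⌈x + y⌉

def ceilAdd (x y : α) : α := x + y + ceilDefect x y

lemma ceilDefect_comm (x y : α) : ceilDefect x y = ceilDefect y x := by
  simp only [ceilDefect, add_comm]

variable [IsOrderedRing α]

lemma ceilDefect_nonneg (x y : α) : 0 ≤ ceilDefect x y := by
  have := Int.ceil_add_le x y
  unfold ceilDefect; omega

lemma ceilDefect_le_one (x y : α) : ceilDefect x y ≤ 1 := by
  have := Int.ceil_add_ceil_le x y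
  unfold ceilDefect; omega

@[simp]
lemma ceilDefect_zero_left (y : α) : ceilDefect 0 y = 0 := by
  simp [ceilDefect]

@[simp]
lemma ceilAdd_zero_left (y : α) : ceilAdd 0 y = y := by
  simp [ceilAdd]

lemma ceil_ceilAdd (x y : α) : ⌈ceilAdd x y⌉ = ⌈x⌉ + ⌈y⌉ := by
  rw [ceilAdd, Int.ceil_add_intCast]
  unfold ceilDefect
  ring

lemma ceilDefect_add_ceilDefect_ceilAdd (x y z : α) :
    ceilDefect x y + ceilDefect (ceilAdd x y) z = ⌈x⌉ + ⌈y⌉ + ⌈z⌉ - ⌈x + y + z⌉ := by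
  have h : ceilAdd x y + z = x + y + z + ceilDefect x y := by rw [ceilAdd]; ring
  unfold ceilDefect
  rw [ceil_ceilAdd, h, Int.ceil_add_intCast, ceilDefect]
  ring

lemma ceilDefect_cocycle (x y z : α) :
    ceilDefect x y + ceilDefect (ceilAdd x y) z
      = ceilDefect y z + ceilDefect x (ceilAdd y z) := by
  rw [ceilDefect_comm x (ceilAdd y z), ceilDefect_add_ceilDefect_ceilAdd,
    ceilDefect_add_ceilDefect_ceilAdd, add_comm (y + z) x, ← add_assoc]
  ring

lemma ceilAdd_assoc (x y z : α) : ceilAdd (ceilAdd x y) z = ceilAdd x (ceilAdd y z) := by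
  have h := congrArg (fun n : ℤ => (n : α)) (ceilDefect_cocycle x y z)
  push_cast at h
  simp only [ceilAdd] at h ⊢
  linear_combination h

end CeilDefect

section Coefficients

variable {d m : ℕ} (b : Fin m → Fin d → ℤ)

lemma castQ_injective : Function.Injective (castQ : (Fin d → ℤ) → Fin d → ℚ) :=
  fun _ _ h => funext fun j => Int.cast_injective (congrFun h j)

lemma castQ_add (u v : Fin d → ℤ) : castQ (u + v) = castQ u + castQ v := by
  funext j; simp [castQ]

lemma castQ_sum_zsmul (F : Finset (Fin m)) (ε : Fin m → ℤ) :
    castQ (∑ i ∈ F, ε i • b i) = ∑ i ∈ F, (ε i : ℚ) • castQ (b i) := by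
  funext j; simp [castQ]

def IsCoeffs (F : Finset (Fin m)) (c : Fin d → ℤ) (γ : Fin m → ℚ) : Prop :=
  (∀ i ∉ F, γ i = 0) ∧ castQ c = ∑ i ∈ F, γ i • castQ (b i)

def IsFanCone (F : Finset (Fin m)) : Prop :=
  LinearIndepOn ℚ (fun i => castQ (b i)) (F : Set (Fin m))

def IsConeCoeffs (p : (Fin d → ℤ) × Finset (Fin m)) (γ : Fin m → ℚ) : Prop :=
  IsCoeffs b p.2 p.1 γ ∧ ∀ i ∈ p.2, 0 < γ i

variable {b}

lemma IsFanCone.mono {F G : Finset (Fin m)} (hG : IsFanCone b G) (hFG : F ⊆ G) :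
    IsFanCone b F :=
  LinearIndepOn.mono hG (Finset.coe_subset.2 hFG)

lemma IsCoeffs.mono {F G : Finset (Fin m)} {c : Fin d → ℤ} {γ : Fin m → ℚ}
    (h : IsCoeffs b F c γ) (hFG : F ⊆ G) : IsCoeffs b G c γ :=
  ⟨fun i hi => h.1 i fun hF => hi (hFG hF),
    h.2.trans (Finset.sum_subset hFG fun i _ hi => by rw [h.1 i hi, zero_smul])⟩

lemma IsCoeffs.add {F : Finset (Fin m)} {c c' : Fin d → ℤ} {γ γ' : Fin m → ℚ}
    (h : IsCoeffs b F c γ) (h' : IsCoeffs b F c' γ') : IsCoeffs b F (c + c') (γ + γ') :=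
  ⟨fun i hi => by simp [h.1 i hi, h'.1 i hi], by
    simp only [castQ_add, h.2, h'.2, Pi.add_apply, add_smul, Finset.sum_add_distrib]⟩

lemma isCoeffs_sum_zsmul {F : Finset (Fin m)} {ε : Fin m → ℤ} (hε : ∀ i ∉ F, ε i = 0) :
    IsCoeffs b F (∑ i ∈ F, ε i • b i) fun i => (ε i : ℚ) :=
  ⟨fun i hi => by simp [hε i hi], castQ_sum_zsmul b F ε⟩

lemma IsCoeffs.unique {F : Finset (Fin m)} {c : Fin d → ℤ} {γ γ' : Fin m → ℚ}
    (hF : IsFanCone b F) (h : IsCoeffs b F c γ) (h' : IsCoeffs b F c γ') : γ = γ' := by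
  funext i
  by_cases hi : i ∈ F
  · exact linearIndepOn_finset_iffₛ.1 hF γ γ' (h.2.symm.trans h'.2) i hi
  · rw [h.1 i hi, h'.1 i hi]

lemma IsCoeffs.vec_eq {F : Finset (Fin m)} {c c' : Fin d → ℤ} {γ : Fin m → ℚ}
    (h : IsCoeffs b F c γ) (h' : IsCoeffs b F c' γ) : c = c' :=
  castQ_injective (h.2.trans h'.2.symm)

lemma coeffOf_eq {F : Finset (Fin m)} {c : Fin d → ℤ} {γ : Fin m → ℚ}
    (hF : IsFanCone b F) (h : IsCoeffs b F c γ) : coeffOf b F c = γ := by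
  have hex : ∃ γ, IsCoeffs b F c γ := ⟨γ, h⟩
  unfold coeffOf
  exact (dif_pos hex).trans (hex.choose_spec.unique hF h)

lemma IsConeCoeffs.nonneg {p : (Fin d → ℤ) × Finset (Fin m)} {γ : Fin m → ℚ}
    (h : IsConeCoeffs b p γ) (i : Fin m) : 0 ≤ γ i := by
  by_cases hi : i ∈ p.2
  · exact (h.2 i hi).le
  · rw [h.1.1 i hi]

lemma IsConeCoeffs.eq_of_snd_eq {p q : (Fin d → ℤ) × Finset (Fin m)} {γ : Fin m → ℚ}
    (hp : IsConeCoeffs b p γ) (hq : IsConeCoeffs b q γ) (h : p.2 = q.2) : p = q :=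
  Prod.ext (hp.1.vec_eq (h ▸ hq.1)) h

lemma mem_multiFanPairs_iff {p : (Fin d → ℤ) × Finset (Fin m)} :
    p ∈ multiFanPairs b ↔ IsFanCone b p.2 ∧ ∃ γ, IsConeCoeffs b p γ := by
  constructor
  · rintro ⟨hF, γ, hpos, hrep⟩
    refine ⟨hF, fun i => if i ∈ p.2 then γ i else 0, ⟨fun i hi => if_neg hi, ?_⟩,
      fun i hi => by simpa [hi] using hpos i hi⟩
    rw [hrep]
    exact Finset.sum_congr rfl fun i hi => by simp [hi]
  · rintro ⟨hF, γ, hrep, hpos⟩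
    exact ⟨hF, γ, hpos, hrep.2⟩

end Coefficients

section BasisProduct

variable {d m : ℕ} {b : Fin m → Fin d → ℤ}

variable (b) in
/-- The index `(c₁ + c₂ + ε, F₁ ∪ F₂)` of the product `y^{(c₁,F₁)} · y^{(c₂,F₂)}`. -/
noncomputable def mulPair (p q : (Fin d → ℤ) × Finset (Fin m)) : (Fin d → ℤ) × Finset (Fin m) :=
  (p.1 + q.1 + ∑ i ∈ p.2 ∪ q.2, epsCoeff b p.2 q.2 p.1 q.1 i • b i, p.2 ∪ q.2)

lemma multiFanMulB_of_not_isFanCone {p q : (Fin d → ℤ) × Finset (Fin m)}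
    (hU : ¬ IsFanCone b (p.2 ∪ q.2)) : multiFanMulB b p q = 0 :=
  if_neg hU

lemma multiFanMulB_comm (p q : (Fin d → ℤ) × Finset (Fin m)) :
    multiFanMulB b p q = multiFanMulB b q p := by
  have hε : epsCoeff b q.2 p.2 q.1 p.1 = epsCoeff b p.2 q.2 p.1 q.1 := by
    funext i
    simp only [epsCoeff, Finset.union_comm q.2, add_comm q.1]
    ring
  unfold multiFanMulB
  rw [hε, Finset.union_comm q.2 p.2, add_comm q.1 p.1]

variable {p q : (Fin d → ℤ) × Finset (Fin m)} {X Y : Fin m → ℚ}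

lemma epsCoeff_eq_ceilDefect (hX : IsConeCoeffs b p X) (hY : IsConeCoeffs b q Y)
    (hU : IsFanCone b (p.2 ∪ q.2)) :
    epsCoeff b p.2 q.2 p.1 q.1 = fun i => ceilDefect (X i) (Y i) := by
  have hXU : IsCoeffs b (p.2 ∪ q.2) p.1 X := hX.1.mono Finset.subset_union_left
  have hYU : IsCoeffs b (p.2 ∪ q.2) q.1 Y := hY.1.mono Finset.subset_union_right
  funext i
  simp only [epsCoeff, coeffOf_eq hU hXU, coeffOf_eq hU hYU, coeffOf_eq hU (hXU.add hYU),
    Pi.add_apply, ceilDefect]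

lemma ceilDefect_eq_zero_of_not_mem (hX : IsConeCoeffs b p X) (hY : IsConeCoeffs b q Y)
    {i : Fin m} (hi : i ∉ p.2 ∪ q.2) : ceilDefect (X i) (Y i) = 0 := by
  rw [Finset.mem_union, not_or] at hi
  simp [hX.1.1 i hi.1, hY.1.1 i hi.2]

lemma isConeCoeffs_mulPair (hX : IsConeCoeffs b p X) (hY : IsConeCoeffs b q Y)
    (hU : IsFanCone b (p.2 ∪ q.2)) :
    IsConeCoeffs b (mulPair b p q) fun i => ceilAdd (X i) (Y i) := by
  have hε : ∀ i ∉ p.2 ∪ q.2, epsCoeff b p.2 q.2 p.1 q.1 i = 0 := by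
    rw [epsCoeff_eq_ceilDefect hX hY hU]
    exact fun i hi => ceilDefect_eq_zero_of_not_mem hX hY hi
  have hsum := ((hX.1.mono Finset.subset_union_left).add
    (hY.1.mono Finset.subset_union_right)).add (isCoeffs_sum_zsmul hε)
  have hγ : (X + Y + fun i => (epsCoeff b p.2 q.2 p.1 q.1 i : ℚ))
      = fun i => ceilAdd (X i) (Y i) := by
    rw [epsCoeff_eq_ceilDefect hX hY hU]; rfl
  refine ⟨hγ ▸ hsum, fun i hi => ?_⟩
  have hd : (0 : ℚ) ≤ ceilDefect (X i) (Y i) := by exact_mod_cast ceilDefect_nonneg _ _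
  have hXi := hX.nonneg i
  have hYi := hY.nonneg i
  rcases Finset.mem_union.1 hi with h | h
  · have := hX.2 i h
    simp only [ceilAdd]; linarith
  · have := hY.2 i h
    simp only [ceilAdd]; linarith

lemma multiFanMulB_of_isFanCone (hX : IsConeCoeffs b p X) (hY : IsConeCoeffs b q Y)
    (hU : IsFanCone b (p.2 ∪ q.2)) :
    multiFanMulB b p q
      = (-1 : ℚ) ^ (∑ i, ceilDefect (X i) (Y i)) • Finsupp.single (mulPair b p q) 1 := by
  have hsign : (((p.2 ∪ q.2).filter fun i => epsCoeff b p.2 q.2 p.1 q.1 i ≠ 0).card : ℤ)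
      = ∑ i, ceilDefect (X i) (Y i) := by
    rw [epsCoeff_eq_ceilDefect hX hY hU,
      card_filter_ne_zero_eq_sum (fun _ => ceilDefect_nonneg _ _) fun _ => ceilDefect_le_one _ _]
    exact Finset.sum_subset (Finset.subset_univ _) fun i _ hi =>
      ceilDefect_eq_zero_of_not_mem hX hY hi
  calc multiFanMulB b p q
      = (-1 : ℚ) ^ ((p.2 ∪ q.2).filter fun i => epsCoeff b p.2 q.2 p.1 q.1 i ≠ 0).card •
          Finsupp.single (mulPair b p q) 1 := if_pos hU
    _ = _ := by rw [← zpow_natCast, hsign]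

lemma mulPair_mem (hp : p ∈ multiFanPairs b) (hq : q ∈ multiFanPairs b)
    (hU : IsFanCone b (p.2 ∪ q.2)) : mulPair b p q ∈ multiFanPairs b := by
  obtain ⟨-, X, hX⟩ := mem_multiFanPairs_iff.1 hp
  obtain ⟨-, Y, hY⟩ := mem_multiFanPairs_iff.1 hq
  exact mem_multiFanPairs_iff.2 ⟨hU, _, isConeCoeffs_mulPair hX hY hU⟩

lemma multiFanMulB_mem_supported (hp : p ∈ multiFanPairs b) (hq : q ∈ multiFanPairs b) :
    multiFanMulB b p q ∈ Finsupp.supported ℚ ℚ (multiFanPairs b) := by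
  by_cases hU : IsFanCone b (p.2 ∪ q.2)
  · obtain ⟨-, X, hX⟩ := mem_multiFanPairs_iff.1 hp
    obtain ⟨-, Y, hY⟩ := mem_multiFanPairs_iff.1 hq
    rw [multiFanMulB_of_isFanCone hX hY hU]
    exact Submodule.smul_mem _ _ (Finsupp.single_mem_supported ℚ 1 (mulPair_mem hp hq hU))
  · rw [multiFanMulB_of_not_isFanCone hU]
    exact Submodule.zero_mem _

lemma multiFanMulB_zero_empty (hq : q ∈ multiFanPairs b) :
    multiFanMulB b (0, ∅) q = Finsupp.single q 1 := by
  obtain ⟨hF, Y, hY⟩ := mem_multiFanPairs_iff.1 hq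
  have h0 : IsConeCoeffs b (0, ∅) 0 :=
    ⟨⟨fun _ _ => rfl, funext fun j => by simp [castQ]⟩, by simp⟩
  have hU : IsFanCone b (∅ ∪ q.2) := by rwa [Finset.empty_union]
  have hq' : mulPair b (0, ∅) q = q :=
    (isConeCoeffs_mulPair h0 hY hU).eq_of_snd_eq (by simpa using hY) (Finset.empty_union _)
  rw [multiFanMulB_of_isFanCone h0 hY hU, hq']
  simp

end BasisProduct

section Algebra

variable {d m : ℕ} (b : Fin m → Fin d → ℤ)

noncomputable def multiFanMulₗ :
    (((Fin d → ℤ) × Finset (Fin m)) →₀ ℚ) →ₗ[ℚ]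
      (((Fin d → ℤ) × Finset (Fin m)) →₀ ℚ) →ₗ[ℚ] (((Fin d → ℤ) × Finset (Fin m)) →₀ ℚ) :=
  Finsupp.linearCombination ℚ fun p => Finsupp.linearCombination ℚ (multiFanMulB b p)

lemma multiFanMul_eq_multiFanMulₗ (f g : ((Fin d → ℤ) × Finset (Fin m)) →₀ ℚ) :
    multiFanMul b f g = multiFanMulₗ b f g := by
  simp only [multiFanMul, multiFanMulₗ, Finsupp.linearCombination_apply,
    LinearMap.finsupp_sum_apply, LinearMap.smul_apply, Finsupp.smul_sum, smul_smul]

variable {b}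

lemma multiFanMulₗ_single_single (p q : (Fin d → ℤ) × Finset (Fin m)) (a c : ℚ) :
    multiFanMulₗ b (Finsupp.single p a) (Finsupp.single q c) = (a * c) • multiFanMulB b p q := by
  simp [multiFanMulₗ, mul_smul]

lemma multiFanMulₗ_comm (f g : ((Fin d → ℤ) × Finset (Fin m)) →₀ ℚ) :
    multiFanMulₗ b f g = multiFanMulₗ b g f := by
  suffices (multiFanMulₗ b).flip = multiFanMulₗ b from (LinearMap.congr_fun₂ this g f)
  ext p q
  simp [multiFanMulₗ_single_single, multiFanMulB_comm p q]

lemma multiFanMulₗ_mem_supported {f g : ((Fin d → ℤ) × Finset (Fin m)) →₀ ℚ}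
    (hf : f ∈ Finsupp.supported ℚ ℚ (multiFanPairs b))
    (hg : g ∈ Finsupp.supported ℚ ℚ (multiFanPairs b)) :
    multiFanMulₗ b f g ∈ Finsupp.supported ℚ ℚ (multiFanPairs b) := by
  have hle : Submodule.map₂ (multiFanMulₗ b) (Finsupp.supported ℚ ℚ (multiFanPairs b))
      (Finsupp.supported ℚ ℚ (multiFanPairs b)) ≤ Finsupp.supported ℚ ℚ (multiFanPairs b) := by
    rw [Finsupp.supported_eq_span_single, Submodule.map₂_span_span, Submodule.span_le,
      ← Finsupp.supported_eq_span_single]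
    rintro _ ⟨_, ⟨p, hp, rfl⟩, _, ⟨q, hq, rfl⟩, rfl⟩
    dsimp only
    rw [multiFanMulₗ_single_single, one_mul, one_smul]
    exact multiFanMulB_mem_supported hp hq
  exact hle (Submodule.apply_mem_map₂ _ hf hg)

lemma multiFanMulₗ_multiFanMulB_single_of_not_isFanCone {p q r : (Fin d → ℤ) × Finset (Fin m)}
    (hU : ¬ IsFanCone b (p.2 ∪ q.2 ∪ r.2)) :
    multiFanMulₗ b (multiFanMulB b p q) (Finsupp.single r 1) = 0 := by
  unfold multiFanMulB
  split_ifs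
  · rw [map_smul, LinearMap.smul_apply, multiFanMulₗ_single_single,
      multiFanMulB_of_not_isFanCone hU, smul_zero, smul_zero]
  · rw [map_zero, LinearMap.zero_apply]

lemma multiFanMulₗ_multiFanMulB_single {p q r : (Fin d → ℤ) × Finset (Fin m)}
    (hp : p ∈ multiFanPairs b) (hq : q ∈ multiFanPairs b) (hr : r ∈ multiFanPairs b) :
    multiFanMulₗ b (multiFanMulB b p q) (Finsupp.single r 1)
      = multiFanMulₗ b (Finsupp.single p 1) (multiFanMulB b q r) := by
  by_cases hU : IsFanCone b (p.2 ∪ q.2 ∪ r.2)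
  swap
  · have hU' : ¬ IsFanCone b (q.2 ∪ r.2 ∪ p.2) := by
      rwa [Finset.union_comm, ← Finset.union_assoc]
    rw [multiFanMulₗ_comm (Finsupp.single p 1),
      multiFanMulₗ_multiFanMulB_single_of_not_isFanCone hU,
      multiFanMulₗ_multiFanMulB_single_of_not_isFanCone hU']
  obtain ⟨-, X, hX⟩ := mem_multiFanPairs_iff.1 hp
  obtain ⟨-, Y, hY⟩ := mem_multiFanPairs_iff.1 hq
  obtain ⟨-, Z, hZ⟩ := mem_multiFanPairs_iff.1 hr
  have hpq : IsFanCone b (p.2 ∪ q.2) := hU.mono Finset.subset_union_left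
  have hU' : IsFanCone b (p.2 ∪ (q.2 ∪ r.2)) := by rwa [← Finset.union_assoc]
  have hqr : IsFanCone b (q.2 ∪ r.2) := hU'.mono Finset.subset_union_right
  have hXY := isConeCoeffs_mulPair hX hY hpq
  have hYZ := isConeCoeffs_mulPair hY hZ hqr
  have hpair : mulPair b (mulPair b p q) r = mulPair b p (mulPair b q r) := by
    have h := isConeCoeffs_mulPair hX hYZ hU'
    simp only [← ceilAdd_assoc] at h
    exact (isConeCoeffs_mulPair hXY hZ hU).eq_of_snd_eq h (Finset.union_assoc _ _ _)
  have hsign : ∑ i, (ceilDefect (X i) (Y i) + ceilDefect (ceilAdd (X i) (Y i)) (Z i))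
      = ∑ i, (ceilDefect (Y i) (Z i) + ceilDefect (X i) (ceilAdd (Y i) (Z i))) :=
    Finset.sum_congr rfl fun i _ => ceilDefect_cocycle _ _ _
  rw [multiFanMulB_of_isFanCone hX hY hpq, multiFanMulB_of_isFanCone hY hZ hqr, map_smul,
    LinearMap.smul_apply, LinearMap.map_smul, multiFanMulₗ_single_single,
    multiFanMulₗ_single_single, one_mul, one_smul, one_smul,
    multiFanMulB_of_isFanCone hXY hZ hU, multiFanMulB_of_isFanCone hX hYZ hU', smul_smul,
    smul_smul, ← zpow_add₀ (by norm_num), ← zpow_add₀ (by norm_num), ← Finset.sum_add_distrib,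
    ← Finset.sum_add_distrib, hsign, hpair]

lemma multiFanMulₗ_assoc {f g h : ((Fin d → ℤ) × Finset (Fin m)) →₀ ℚ}
    (hf : f ∈ Finsupp.supported ℚ ℚ (multiFanPairs b))
    (hg : g ∈ Finsupp.supported ℚ ℚ (multiFanPairs b))
    (hh : h ∈ Finsupp.supported ℚ ℚ (multiFanPairs b)) :
    multiFanMulₗ b (multiFanMulₗ b f g) h = multiFanMulₗ b f (multiFanMulₗ b g h) := by
  set B := multiFanMulₗ b
  refine LinearMap.eqOn_supported (φ := B (B f g)) (ψ := B f ∘ₗ B g) (fun r hr => ?_) hh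
  refine LinearMap.eqOn_supported (φ := B.flip (Finsupp.single r 1) ∘ₗ B f)
    (ψ := B f ∘ₗ B.flip (Finsupp.single r 1)) (fun q hq => ?_) hg
  refine LinearMap.eqOn_supported
    (φ := B.flip (Finsupp.single r 1) ∘ₗ B.flip (Finsupp.single q 1))
    (ψ := B.flip (B (Finsupp.single q 1) (Finsupp.single r 1))) (fun p hp => ?_) hf
  simp only [LinearMap.comp_apply, LinearMap.flip_apply, B, multiFanMulₗ_single_single, one_mul,
    one_smul]
  exact multiFanMulₗ_multiFanMulB_single hp hq hr

lemma multiFanMulₗ_single_zero_empty {f : ((Fin d → ℤ) × Finset (Fin m)) →₀ ℚ}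
    (hf : f ∈ Finsupp.supported ℚ ℚ (multiFanPairs b)) :
    multiFanMulₗ b (Finsupp.single (0, ∅) 1) f = f :=
  LinearMap.eqOn_supported (φ := multiFanMulₗ b (Finsupp.single (0, ∅) 1)) (ψ := LinearMap.id)
    (fun q hq => by simp [multiFanMulₗ_single_single, multiFanMulB_zero_empty hq]) hf

end Algebra

/-- The deformed multi-fan group ring ℚ[Δ_β] (Section 3.4): the product (3.10)
is well defined (it preserves the span of {y^{(c,F)} : (c,F) ∈ N^{Δ_β}}),
commutative and associative, and y^{(0,∅)} is a unit; hence ℚ[Δ_β] is a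
commutative associative unital ℚ-algebra. -/
theorem multiFan_ring_structure {d m : ℕ} (b : Fin m → Fin d → ℤ) :
    (∀ f g : ((Fin d → ℤ) × Finset (Fin m)) →₀ ℚ,
      ↑f.support ⊆ multiFanPairs b → ↑g.support ⊆ multiFanPairs b →
      ↑(multiFanMul b f g).support ⊆ multiFanPairs b) ∧
    (∀ f g : ((Fin d → ℤ) × Finset (Fin m)) →₀ ℚ,
      multiFanMul b f g = multiFanMul b g f) ∧
    (∀ f g h : ((Fin d → ℤ) × Finset (Fin m)) →₀ ℚ,
      ↑f.support ⊆ multiFanPairs b → ↑g.support ⊆ multiFanPairs b →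
      ↑h.support ⊆ multiFanPairs b →
      multiFanMul b (multiFanMul b f g) h = multiFanMul b f (multiFanMul b g h)) ∧
    (∀ f : ((Fin d → ℤ) × Finset (Fin m)) →₀ ℚ,
      ↑f.support ⊆ multiFanPairs b →
      multiFanMul b (Finsupp.single (0, ∅) 1) f = f ∧
      multiFanMul b f (Finsupp.single (0, ∅) 1) = f) := by
  simp only [multiFanMul_eq_multiFanMulₗ]
  -- `f ∈ Finsupp.supported ℚ ℚ s` unfolds to `↑f.support ⊆ s`.
  refine ⟨fun f g hf hg => multiFanMulₗ_mem_supported hf hg, multiFanMulₗ_comm,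
    fun f g h hf hg hh => multiFanMulₗ_assoc hf hg hh, fun f hf => ?_⟩
  rw [multiFanMulₗ_comm f]
  exact ⟨multiFanMulₗ_single_zero_empty hf, multiFanMulₗ_single_zero_empty hf⟩
end
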